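/- Let v = (v₁,v₂) : [0,1] → ℝ² be continuous and satisfy the even-odd symmetry v₁(1−x) = v₁(x) and v₂(1−x) = −v₂(x) for all x ∈ [0,1] (equivalently V(1−x) = J₁·V(x)·J₁). Let λ ∈ ℂ and let y : [0,1] → M₂(ℂ) be the unique differentiable solution of J·y'(x) + V(x)·y(x) = λ·y(x) with y(0) = I. Then the monodromy matrix has equal diagonal entries: y(1)₁₁ = y(1)₂₂. Moreover, if y(1)₁₂ = 0 then (y(1)₂₂)² = 1, and if y(1)₂₁ = 0 then (y(1)₁₁)² = 1. -/

import Mathlib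

/-!
Write the ODE as `y' = B(t) y` with `B = J (V - λ)`. The symmetry of `v` gives
`J₁ B(1 - t) = -B(t) J₁`, so `t ↦ J₁ y(1 - t) J₁` solves the same linear ODE as
`t ↦ y(t) J₁ y(1) J₁`; both start at `J₁ y(1) J₁`, hence they agree, and at `t = 1` this says
`y(1) J₁ y(1) J₁ = I`. Since `tr B = 0`, `det y(1) = 1`, and these two identities on the
entries `a, b, c, d` of `y(1)` give `a² = d² = 1 + bc = ad`, so `(a - d)² = 0`.
-/

open Set
open scoped Matrix.Norms.L2Operator

noncomputable section

/-- The matrix `J = [[0,1],[-1,0]]` viewed as a complex matrix. -/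
def Jm : Matrix (Fin 2) (Fin 2) ℂ := !![0, 1; -1, 0]

/-- The Zakharov–Shabat potential matrix `V(x) = [[v₁(x), v₂(x)],[v₂(x), -v₁(x)]]`
of a vector function `v = (v₁, v₂)`, viewed as a complex matrix. -/
def ZS (v : ℝ → ℝ × ℝ) (x : ℝ) : Matrix (Fin 2) (Fin 2) ℂ :=
  !![((v x).1 : ℂ), ((v x).2 : ℂ); ((v x).2 : ℂ), -((v x).1 : ℂ)]

section LinearODE

variable {E : Type*} [NormedRing E] [NormedAlgebra ℝ E]

theorem eqOn_of_hasDerivWithinAt_mul_left {B f g : ℝ → E} {a b : ℝ}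
    (hB : ContinuousOn B (Icc a b))
    (hf : ∀ t ∈ Icc a b, HasDerivWithinAt f (B t * f t) (Icc a b) t)
    (hg : ∀ t ∈ Icc a b, HasDerivWithinAt g (B t * g t) (Icc a b) t)
    (ha : f a = g a) : EqOn f g (Icc a b) := by
  obtain ⟨C, hC⟩ := isCompact_Icc.exists_bound_of_continuousOn hB
  have hLip : ∀ t ∈ Ico a b, LipschitzOnWith C.toNNReal (fun x => B t * x) univ := by
    intro t ht
    refine LipschitzOnWith.of_dist_le_mul fun x _ x' _ => ?_
    calc dist (B t * x) (B t * x') = ‖B t * (x - x')‖ := by rw [dist_eq_norm, mul_sub]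
      _ ≤ ‖B t‖ * ‖x - x'‖ := norm_mul_le _ _
      _ ≤ C.toNNReal * dist x x' := by
        rw [dist_eq_norm]
        gcongr
        exact (hC t (Ico_subset_Icc_self ht)).trans (Real.le_coe_toNNReal C)
  have hright : ∀ {h : ℝ → E}, (∀ t ∈ Icc a b, HasDerivWithinAt h (B t * h t) (Icc a b) t) →
      ∀ t ∈ Ico a b, HasDerivWithinAt h (B t * h t) (Ici t) t := fun hh t ht =>
    (hh t (Ico_subset_Icc_self ht)).mono_of_mem_nhdsWithin (Icc_mem_nhdsGE_of_mem ht)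
  exact ODE_solution_unique_of_mem_Icc_right hLip
    (fun t ht => (hf t ht).continuousWithinAt) (hright hf) (fun _ _ => mem_univ _)
    (fun t ht => (hg t ht).continuousWithinAt) (hright hg) (fun _ _ => mem_univ _) ha

theorem hasDerivWithinAt_mul_left_reflect {B y : ℝ → E} (P Q : E)
    (hy : ∀ t ∈ Icc (0 : ℝ) 1, HasDerivWithinAt y (B t * y t) (Icc 0 1) t)
    (hB : ∀ t ∈ Icc (0 : ℝ) 1, P * B (1 - t) = -(B t * P)) :
    ∀ t ∈ Icc (0 : ℝ) 1, HasDerivWithinAt (fun s => P * y (1 - s) * Q)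
      (B t * (P * y (1 - t) * Q)) (Icc 0 1) t := by
  intro t ht
  have hmaps : MapsTo (fun s : ℝ => 1 - s) (Icc 0 1) (Icc 0 1) := fun s hs =>
    ⟨by linarith [hs.2], by linarith [hs.1]⟩
  have hrefl : HasDerivWithinAt (fun s => y (1 - s)) ((-1 : ℝ) • (B (1 - t) * y (1 - t)))
      (Icc 0 1) t :=
    (hy (1 - t) (hmaps ht)).scomp t ((hasDerivWithinAt_id t _).const_sub 1) hmaps
  convert (hrefl.const_mul P).mul_const Q using 1
  rw [neg_one_smul, mul_neg, ← mul_assoc P (B (1 - t)), hB t ht]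
  noncomm_ring

end LinearODE

theorem hasDerivWithinAt_det_fin_two {y : ℝ → Matrix (Fin 2) (Fin 2) ℂ}
    {B : Matrix (Fin 2) (Fin 2) ℂ} {s : Set ℝ} {x : ℝ}
    (hy : HasDerivWithinAt y (B * y x) s x) :
    HasDerivWithinAt (fun t => (y t).det) (B.trace * (y x).det) s x := by
  have hentry (i j : Fin 2) : HasDerivWithinAt (fun t => y t i j) ((B * y x) i j) s x :=
    ((Matrix.entryLinearMap ℂ ℂ i j).toContinuousLinearMap.restrictScalars ℝ).hasFDerivAt
      |>.comp_hasDerivWithinAt x hy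
  rw [funext fun t => Matrix.det_fin_two (y t)]
  refine (((hentry 0 0).mul (hentry 1 1)).sub ((hentry 0 1).mul (hentry 1 0))).congr_deriv ?_
  simp only [Matrix.det_fin_two, Matrix.mul_apply, Fin.sum_univ_two, Matrix.trace_fin_two]
  ring

theorem det_eq_of_hasDerivWithinAt_mul_left {B y : ℝ → Matrix (Fin 2) (Fin 2) ℂ} {a b : ℝ}
    (hy : ∀ t ∈ Icc a b, HasDerivWithinAt y (B t * y t) (Icc a b) t)
    (htr : ∀ t ∈ Icc a b, (B t).trace = 0) :
    ∀ t ∈ Icc a b, (y t).det = (y a).det := by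
  have hdet (t) (ht : t ∈ Icc a b) : HasDerivWithinAt (fun t => (y t).det) 0 (Icc a b) t := by
    simpa [htr t ht] using hasDerivWithinAt_det_fin_two (hy t ht)
  exact constant_of_has_deriv_right_zero (fun t ht => (hdet t ht).continuousWithinAt)
    fun t ht => (hdet t (Ico_subset_Icc_self ht)).mono_of_mem_nhdsWithin (Icc_mem_nhdsGE_of_mem ht)

def J1m {R : Type*} [Ring R] : Matrix (Fin 2) (Fin 2) R := !![1, 0; 0, -1]

theorem J1m_mul_J1m {R : Type*} [Ring R] : (J1m * J1m : Matrix (Fin 2) (Fin 2) R) = 1 := by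
  ext i j
  fin_cases i <;> fin_cases j <;> simp [J1m]

theorem diag_eq_and_sq_eq_one_of_det_eq_one_of_mul_J1m_conj_eq_one {R : Type*} [CommRing R]
    [IsReduced R] {M : Matrix (Fin 2) (Fin 2) R} (hdet : M.det = 1)
    (hinv : M * (J1m * M * J1m) = 1) :
    M 0 0 = M 1 1 ∧ (M 0 1 = 0 → M 1 1 ^ 2 = 1) ∧ (M 1 0 = 0 → M 0 0 ^ 2 = 1) := by
  have h00 : M 0 0 ^ 2 - M 0 1 * M 1 0 = 1 := by
    simpa [Matrix.mul_apply, J1m, sq, sub_eq_add_neg, -Matrix.cons_mul] using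
      congrFun (congrFun hinv 0) 0
  have h11 : M 1 1 ^ 2 - M 1 0 * M 0 1 = 1 := by
    simpa [Matrix.mul_apply, J1m, sq, neg_add_eq_sub, -Matrix.cons_mul] using
      congrFun (congrFun hinv 1) 1
  rw [Matrix.det_fin_two] at hdet
  refine ⟨?_, fun hb => ?_, fun hc => ?_⟩
  · have hsq : (M 0 0 - M 1 1) ^ 2 = 0 := by linear_combination h00 + h11 - 2 * hdet
    exact sub_eq_zero.1 (IsReduced.eq_zero _ ⟨2, hsq⟩)
  · linear_combination h11 + M 1 0 * hb
  · linear_combination h00 + M 0 1 * hc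

section ZakharovShabat

variable (v : ℝ → ℝ × ℝ) (lam : ℂ)

def zsCoeff (t : ℝ) : Matrix (Fin 2) (Fin 2) ℂ := Jm * (ZS v t - lam • 1)

theorem eq_zsCoeff_mul_of_Jm_mul_add_ZS_mul (x : ℝ) {Y Y' : Matrix (Fin 2) (Fin 2) ℂ}
    (h : Jm * Y' + ZS v x * Y = lam • Y) : Y' = zsCoeff v lam x * Y := by
  have hJ : Jm * Jm = -1 := by simp [Jm, Matrix.one_fin_two]
  calc Y' = -(Jm * (Jm * Y')) := by rw [← mul_assoc, hJ, neg_one_mul, neg_neg]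
    _ = zsCoeff v lam x * Y := by
      rw [eq_sub_of_add_eq h, zsCoeff, mul_assoc, sub_mul, smul_mul_assoc, one_mul]
      noncomm_ring

theorem trace_zsCoeff (t : ℝ) : (zsCoeff v lam t).trace = 0 := by
  simp [zsCoeff, Jm, ZS, Matrix.trace_fin_two, Matrix.one_fin_two]

theorem continuousOn_zsCoeff {s : Set ℝ} (hv1 : ContinuousOn (fun x => (v x).1) s)
    (hv2 : ContinuousOn (fun x => (v x).2) s) : ContinuousOn (zsCoeff v lam) s := by
  have h1 := Complex.continuous_ofReal.comp_continuousOn hv1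
  have h2 := Complex.continuous_ofReal.comp_continuousOn hv2
  have hZS : ContinuousOn (ZS v) s := by
    refine continuousOn_pi.2 fun i => continuousOn_pi.2 fun j => ?_
    fin_cases i <;> fin_cases j
    exacts [h1, h2, h2, h1.neg]
  exact continuousOn_const.mul (hZS.sub continuousOn_const)

theorem J1m_mul_zsCoeff_one_sub {x : ℝ} (h1 : (v (1 - x)).1 = (v x).1)
    (h2 : (v (1 - x)).2 = -(v x).2) :
    J1m * zsCoeff v lam (1 - x) = -(zsCoeff v lam x * J1m) := by
  simp only [zsCoeff, ZS, h1, h2]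
  simp [J1m, Jm, Matrix.one_fin_two, sub_eq_add_neg]

end ZakharovShabat

/-- If the continuous potential `v` has the even-odd symmetry `v₁(1−x) = v₁(x)`,
`v₂(1−x) = −v₂(x)` and `y` solves `J·y' + V·y = λ·y` with `y(0) = I`, then the monodromy
matrix has equal diagonal entries `y(1)₁₁ = y(1)₂₂`; moreover if `y(1)₁₂ = 0` then
`y(1)₂₂² = 1`, and if `y(1)₂₁ = 0` then `y(1)₁₁² = 1`. -/
theorem stmt10 (v : ℝ → ℝ × ℝ)
    (hv1 : ContinuousOn (fun x => (v x).1) (Icc 0 1))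
    (hv2 : ContinuousOn (fun x => (v x).2) (Icc 0 1))
    (hsym : ∀ x ∈ Icc (0 : ℝ) 1, (v (1 - x)).1 = (v x).1 ∧ (v (1 - x)).2 = -(v x).2)
    (lam : ℂ) (y y' : ℝ → Matrix (Fin 2) (Fin 2) ℂ)
    (hderiv : ∀ x ∈ Icc (0 : ℝ) 1, HasDerivWithinAt y (y' x) (Icc 0 1) x)
    (hode : ∀ x ∈ Icc (0 : ℝ) 1, Jm * y' x + ZS v x * y x = lam • y x)
    (hinit : y 0 = 1) :
    y 1 0 0 = y 1 1 1 ∧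
    (y 1 0 1 = 0 → (y 1 1 1) ^ 2 = 1) ∧
    (y 1 1 0 = 0 → (y 1 0 0) ^ 2 = 1) := by
  have hy (x) (hx : x ∈ Icc (0 : ℝ) 1) :
      HasDerivWithinAt y (zsCoeff v lam x * y x) (Icc 0 1) x :=
    eq_zsCoeff_mul_of_Jm_mul_add_ZS_mul v lam x (hode x hx) ▸ hderiv x hx
  have hone : (1 : ℝ) ∈ Icc (0 : ℝ) 1 := right_mem_Icc.2 zero_le_one
  have hdet : (y 1).det = 1 := by
    simpa [hinit] using
      det_eq_of_hasDerivWithinAt_mul_left hy (fun t _ => trace_zsCoeff v lam t) 1 hone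
  have hreflect : EqOn (fun t => J1m * y (1 - t) * J1m) (fun t => y t * (J1m * y 1 * J1m))
      (Icc 0 1) :=
    eqOn_of_hasDerivWithinAt_mul_left (continuousOn_zsCoeff v lam hv1 hv2)
      (hasDerivWithinAt_mul_left_reflect J1m J1m hy fun t ht =>
        J1m_mul_zsCoeff_one_sub v lam (hsym t ht).1 (hsym t ht).2)
      (fun t ht => mul_assoc (zsCoeff v lam t) (y t) _ ▸ (hy t ht).mul_const _)
      (by simp [hinit])
  have hinv : y 1 * (J1m * y 1 * J1m) = 1 := by
    simpa [hinit, J1m_mul_J1m] using (hreflect hone).symm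
  exact diag_eq_and_sq_eq_one_of_det_eq_one_of_mul_J1m_conj_eq_one hdet hinv
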